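/- arXiv:2010.07431 — 10 statements merged into one kernel-verified Lean document; each statement's English description precedes it below -/
import Mathlib

section
/- Assume the feasible family F is nonempty. Then a set S ⊆ V is extendable if and only if |S ∩ V_c| ≤ u_c for every color c = 1,…,C and Σ_{c=1}^C max(|S ∩ V_c|, ℓ_c) ≤ k. -/
open Finset

/-- The feasible family `F`: subsets of `V` of size at most `k` whose intersection with
each color class `Vc c` has cardinality between `ℓ c` and `u c`. -/
def Feasible {α : Type*} [DecidableEq α] {C : ℕ} (V : Finset α) (Vc : Fin C → Finset α)
    (ℓ u : Fin C → ℕ) (k : ℕ) (S : Finset α) : Prop :=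
  S ⊆ V ∧ S.card ≤ k ∧ ∀ c, ℓ c ≤ (S ∩ Vc c).card ∧ (S ∩ Vc c).card ≤ u c

/-- A set is extendable if it is contained in some feasible set. -/
def Extendable {α : Type*} [DecidableEq α] {C : ℕ} (V : Finset α) (Vc : Fin C → Finset α)
    (ℓ u : Fin C → ℕ) (k : ℕ) (S : Finset α) : Prop :=
  ∃ S', Feasible V Vc ℓ u k S' ∧ S ⊆ S'

lemma card_eq_sum_inter {α : Type*} [DecidableEq α] {C : ℕ} {V : Finset α}
    {Vc : Fin C → Finset α} (hV : V = Finset.univ.biUnion Vc)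
    (hdisj : ∀ c d : Fin C, c ≠ d → Disjoint (Vc c) (Vc d))
    {A : Finset α} (hA : A ⊆ V) :
    A.card = ∑ c, (A ∩ Vc c).card := by
  have hA' : A = Finset.univ.biUnion (fun c => A ∩ Vc c) := by
    ext x
    simp only [Finset.mem_biUnion, Finset.mem_inter, Finset.mem_univ, true_and]
    constructor
    · intro hx
      have hx' := hA hx
      rw [hV] at hx'
      simp only [Finset.mem_biUnion, Finset.mem_univ, true_and] at hx'
      obtain ⟨c, hc⟩ := hx'
      exact ⟨c, hx, hc⟩
    · rintro ⟨c, hx, _⟩; exact hx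
  conv_lhs => rw [hA']
  exact Finset.card_biUnion (fun c _ d _ hcd =>
    (hdisj c d hcd).mono Finset.inter_subset_right Finset.inter_subset_right)

theorem extendable_iff {α : Type*} [DecidableEq α] (C : ℕ) (V : Finset α)
    (Vc : Fin C → Finset α)
    (hV : V = Finset.univ.biUnion Vc)
    (hdisj : ∀ c d : Fin C, c ≠ d → Disjoint (Vc c) (Vc d))
    (ℓ u : Fin C → ℕ) (hlu : ∀ c, ℓ c ≤ u c) (k : ℕ)
    (hne : ∃ S, Feasible V Vc ℓ u k S)
    (S : Finset α) (hS : S ⊆ V) :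
    Extendable V Vc ℓ u k S ↔
      (∀ c, (S ∩ Vc c).card ≤ u c) ∧ ∑ c, max (S ∩ Vc c).card (ℓ c) ≤ k := by
  constructor
  · rintro ⟨S', ⟨hS'V, hS'k, hS'c⟩, hSS'⟩
    refine ⟨fun c => le_trans (Finset.card_le_card
      (Finset.inter_subset_inter hSS' Finset.Subset.rfl)) (hS'c c).2, ?_⟩
    calc ∑ c, max (S ∩ Vc c).card (ℓ c)
        ≤ ∑ c, (S' ∩ Vc c).card := Finset.sum_le_sum fun c _ =>
          max_le (Finset.card_le_card (Finset.inter_subset_inter hSS' Finset.Subset.rfl))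
            (hS'c c).1
      _ = S'.card := (card_eq_sum_inter hV hdisj hS'V).symm
      _ ≤ k := hS'k
  · rintro ⟨hu, hsum⟩
    obtain ⟨S0, hS0V, hS0k, hS0c⟩ := hne
    have hℓ : ∀ c, ℓ c ≤ (Vc c).card := fun c =>
      le_trans (hS0c c).1 (Finset.card_le_card Finset.inter_subset_right)
    have hex : ∀ c, ∃ T, S ∩ Vc c ⊆ T ∧ T ⊆ Vc c ∧ T.card = max (S ∩ Vc c).card (ℓ c) :=
      fun c => Finset.exists_subsuperset_card_eq Finset.inter_subset_right
        (le_max_left _ _)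
        (max_le (Finset.card_le_card Finset.inter_subset_right) (hℓ c))
    choose T hT1 hT2 hT3 using hex
    have hdisjT : ∀ c d : Fin C, c ≠ d → Disjoint (T c) (T d) := fun c d h =>
      (hdisj c d h).mono (hT2 c) (hT2 d)
    have hinter : ∀ c, (Finset.univ.biUnion T) ∩ Vc c = T c := by
      intro c
      apply Finset.Subset.antisymm
      · intro x hx
        simp only [Finset.mem_inter, Finset.mem_biUnion, Finset.mem_univ, true_and] at hx
        obtain ⟨⟨d, hd⟩, hxc⟩ := hx
        by_cases hcd : d = c
        · subst hcd; exact hd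
        · exact absurd hxc (Finset.disjoint_left.mp (hdisj d c hcd) (hT2 d hd))
      · intro x hx
        simp only [Finset.mem_inter, Finset.mem_biUnion, Finset.mem_univ, true_and]
        exact ⟨⟨c, hx⟩, hT2 c hx⟩
    have hcard : (Finset.univ.biUnion T).card = ∑ c, (T c).card :=
      Finset.card_biUnion (fun c _ d _ hcd => hdisjT c d hcd)
    refine ⟨Finset.univ.biUnion T, ⟨?_, ?_, ?_⟩, ?_⟩
    · intro x hx
      simp only [Finset.mem_biUnion, Finset.mem_univ, true_and] at hx
      obtain ⟨c, hc⟩ := hx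
      rw [hV]
      exact Finset.mem_biUnion.mpr ⟨c, Finset.mem_univ c, hT2 c hc⟩
    · rw [hcard]
      calc ∑ c, (T c).card = ∑ c, max (S ∩ Vc c).card (ℓ c) :=
            Finset.sum_congr rfl fun c _ => hT3 c
        _ ≤ k := hsum
    · intro c
      rw [hinter c, hT3 c]
      exact ⟨le_max_right _ _, max_le (hu c) (hlu c)⟩
    · intro x hx
      have hx' := hS hx
      rw [hV] at hx'
      simp only [Finset.mem_biUnion, Finset.mem_univ, true_and] at hx' ⊢
      obtain ⟨c, hc⟩ := hx'
      exact ⟨c, hT1 c (Finset.mem_inter.mpr ⟨hx, hc⟩)⟩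
end

section
/- Assume the feasible family F is nonempty, and let 𝓑 be the collection of all inclusion-maximal sets in F. If B₁, B₂ ∈ 𝓑 and x ∈ B₁ \ B₂, then there exists y ∈ B₂ \ B₁ such that (B₁ \ {x}) ∪ {y} ∈ 𝓑. -/
open Finset

/-- `B` is an inclusion-maximal member of the feasible family `F`. -/
def MaximalFeasible {α : Type*} [DecidableEq α] {C : ℕ} (V : Finset α) (Vc : Fin C → Finset α)
    (ℓ u : Fin C → ℕ) (k : ℕ) (B : Finset α) : Prop :=
  Feasible V Vc ℓ u k B ∧ ∀ B', Feasible V Vc ℓ u k B' → B ⊆ B' → B' = B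

/-
All inclusion-maximal feasible sets have the same size `min k (∑ c, min (u c) |V_c|)`: below that
size some color class still has room, so the set can be enlarged. Conversely a feasible set of
that size is maximal, so it suffices to make `(B₁ \ {x}) ∪ {y}` feasible. If `B₂ \ B₁` meets the
color class of `x`, swap `x` for an element of it; otherwise `B₂` has fewer elements of that color
than `B₁`, so `B₁ \ {x}` is still feasible, and being smaller than `B₂` it is augmented by an
element of `B₂` from a color class in which `B₂` has more elements.
-/

def feasibleRank {α : Type*} {C : ℕ} (Vc : Fin C → Finset α) (u : Fin C → ℕ) (k : ℕ) : ℕ :=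
  min k (∑ c, min (u c) (Vc c).card)

section ColorClasses

open Function

variable {α : Type*} {C : ℕ} {Vc : Fin C → Finset α} {x y : α} {c : Fin C}

lemma notMem_color_of_ne (hdisj : Pairwise (Disjoint on Vc)) {d : Fin C} (hx : x ∈ Vc c)
    (hdc : d ≠ c) : x ∉ Vc d :=
  fun hxd => disjoint_left.mp (hdisj hdc) hxd hx

variable [DecidableEq α] {V : Finset α} {ℓ u : Fin C → ℕ} {k : ℕ} {S T : Finset α}

lemma exists_mem_color (hV : V = univ.biUnion Vc) (hx : x ∈ V) : ∃ c, x ∈ Vc c := by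
  simpa [hV] using hx

lemma color_subset (hV : V = univ.biUnion Vc) (c : Fin C) : Vc c ⊆ V :=
  hV ▸ subset_biUnion_of_mem Vc (mem_univ c)

lemma card_eq_sum_card_inter (hV : V = univ.biUnion Vc) (hdisj : Pairwise (Disjoint on Vc))
    (hS : S ⊆ V) : S.card = ∑ c, (S ∩ Vc c).card := by
  conv_lhs => rw [← inter_eq_left.mpr hS, hV, inter_biUnion]
  exact card_biUnion fun c _ d _ hcd =>
    (hdisj hcd).mono inter_subset_right inter_subset_right

namespace Feasible

lemma insert_of_lt (hV : V = univ.biUnion Vc) (hdisj : Pairwise (Disjoint on Vc))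
    (hS : Feasible V Vc ℓ u k S) (hyS : y ∉ S) (hyc : y ∈ Vc c) (hk : S.card < k)
    (hu : (S ∩ Vc c).card < u c) : Feasible V Vc ℓ u k (insert y S) := by
  refine ⟨insert_subset (color_subset hV c hyc) hS.1, ?_, fun d => ?_⟩
  · rw [card_insert_of_notMem hyS]; omega
  by_cases hdc : d = c
  · subst hdc
    rw [insert_inter_of_mem hyc, card_insert_of_notMem fun h => hyS (mem_inter.mp h).1]
    have := hS.2.2 d
    omega
  · rw [insert_inter_of_notMem (notMem_color_of_ne hdisj hyc hdc)]
    exact hS.2.2 d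

lemma erase (hdisj : Pairwise (Disjoint on Vc)) (hS : Feasible V Vc ℓ u k S) (hxS : x ∈ S)
    (hxc : x ∈ Vc c) (hℓ : ℓ c < (S ∩ Vc c).card) : Feasible V Vc ℓ u k (S.erase x) := by
  refine ⟨(erase_subset _ _).trans hS.1, (card_le_card (erase_subset _ _)).trans hS.2.1,
    fun d => ?_⟩
  rw [erase_inter]
  by_cases hdc : d = c
  · subst hdc
    rw [card_erase_of_mem (mem_inter.mpr ⟨hxS, hxc⟩)]
    have := hS.2.2 d
    omega
  · rw [erase_eq_of_notMem fun h => notMem_color_of_ne hdisj hxc hdc (mem_inter.mp h).2]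
    exact hS.2.2 d

lemma insert_erase_of_mem_color (hV : V = univ.biUnion Vc) (hdisj : Pairwise (Disjoint on Vc))
    (hS : Feasible V Vc ℓ u k S) (hxS : x ∈ S) (hxc : x ∈ Vc c) (hyS : y ∉ S)
    (hyc : y ∈ Vc c) : Feasible V Vc ℓ u k (insert y (S.erase x)) := by
  have hyS' : y ∉ S.erase x := fun h => hyS (mem_of_mem_erase h)
  refine ⟨insert_subset (color_subset hV c hyc) ((erase_subset _ _).trans hS.1), ?_,
    fun d => ?_⟩
  · rw [card_insert_of_notMem hyS', card_erase_of_mem hxS]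
    have := card_pos.mpr ⟨x, hxS⟩
    have := hS.2.1
    omega
  by_cases hdc : d = c
  · subst hdc
    rw [insert_inter_of_mem hyc, erase_inter,
      card_insert_of_notMem fun h => hyS (mem_inter.mp (mem_of_mem_erase h)).1,
      card_erase_of_mem (mem_inter.mpr ⟨hxS, hxc⟩)]
    have := card_pos.mpr ⟨x, mem_inter.mpr ⟨hxS, hxc⟩⟩
    have := hS.2.2 d
    omega
  · rw [insert_inter_of_notMem (notMem_color_of_ne hdisj hyc hdc), erase_inter,
      erase_eq_of_notMem fun h => notMem_color_of_ne hdisj hxc hdc (mem_inter.mp h).2]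
    exact hS.2.2 d

lemma exists_insert_of_card_lt (hV : V = univ.biUnion Vc) (hdisj : Pairwise (Disjoint on Vc))
    (hS : Feasible V Vc ℓ u k S) (hT : Feasible V Vc ℓ u k T) (hST : S.card < T.card) :
    ∃ y ∈ T \ S, Feasible V Vc ℓ u k (insert y S) := by
  have hsum : ∑ c, (S ∩ Vc c).card < ∑ c, (T ∩ Vc c).card := by
    rwa [← card_eq_sum_card_inter hV hdisj hS.1, ← card_eq_sum_card_inter hV hdisj hT.1]
  obtain ⟨c, -, hc⟩ := exists_lt_of_sum_lt hsum
  obtain ⟨y, hyTc, hySc⟩ := exists_mem_notMem_of_card_lt_card hc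
  obtain ⟨hyT, hyc⟩ := mem_inter.mp hyTc
  have hyS : y ∉ S := fun h => hySc (mem_inter.mpr ⟨h, hyc⟩)
  exact ⟨y, mem_sdiff.mpr ⟨hyT, hyS⟩, hS.insert_of_lt hV hdisj hyS hyc
    (hST.trans_le hT.2.1) (hc.trans_le (hT.2.2 c).2)⟩

lemma card_le_feasibleRank (hV : V = univ.biUnion Vc) (hdisj : Pairwise (Disjoint on Vc))
    (hS : Feasible V Vc ℓ u k S) : S.card ≤ feasibleRank Vc u k :=
  le_min hS.2.1 <| card_eq_sum_card_inter hV hdisj hS.1 ▸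
    sum_le_sum fun c _ => le_min (hS.2.2 c).2 (card_le_card inter_subset_right)

lemma maximalFeasible_of_card_eq (hV : V = univ.biUnion Vc) (hdisj : Pairwise (Disjoint on Vc))
    (hS : Feasible V Vc ℓ u k S) (hcard : S.card = feasibleRank Vc u k) :
    MaximalFeasible V Vc ℓ u k S :=
  ⟨hS, fun _ hT hST =>
    (eq_of_subset_of_card_le hST (hcard ▸ hT.card_le_feasibleRank hV hdisj)).symm⟩

end Feasible

lemma MaximalFeasible.card_eq_feasibleRank (hV : V = univ.biUnion Vc)
    (hdisj : Pairwise (Disjoint on Vc)) (hB : MaximalFeasible V Vc ℓ u k S) :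
    S.card = feasibleRank Vc u k := by
  refine (hB.1.card_le_feasibleRank hV hdisj).antisymm (not_lt.mp fun hlt => ?_)
  have hsum : ∑ c, (S ∩ Vc c).card < ∑ c, min (u c) (Vc c).card :=
    card_eq_sum_card_inter hV hdisj hB.1.1 ▸ hlt.trans_le (min_le_right _ _)
  obtain ⟨c, -, hc⟩ := exists_lt_of_sum_lt hsum
  obtain ⟨y, hyc, hySc⟩ := exists_mem_notMem_of_card_lt_card (hc.trans_le (min_le_right _ _))
  have hyS : y ∉ S := fun h => hySc (mem_inter.mpr ⟨h, hyc⟩)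
  have hfeas := hB.1.insert_of_lt hV hdisj hyS hyc (hlt.trans_le (min_le_left _ _))
    (hc.trans_le (min_le_left _ _))
  exact hyS (hB.2 _ hfeas (subset_insert _ _) ▸ mem_insert_self y S)

lemma MaximalFeasible.insert_erase (hV : V = univ.biUnion Vc) (hdisj : Pairwise (Disjoint on Vc))
    (hB : MaximalFeasible V Vc ℓ u k S) (hxS : x ∈ S) (hyS : y ∉ S)
    (h : Feasible V Vc ℓ u k (insert y (S.erase x))) :
    MaximalFeasible V Vc ℓ u k (insert y (S.erase x)) := by
  refine h.maximalFeasible_of_card_eq hV hdisj ?_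
  rw [card_insert_of_notMem fun h => hyS (mem_of_mem_erase h), card_erase_of_mem hxS,
    Nat.sub_add_cancel (card_pos.mpr ⟨x, hxS⟩), hB.card_eq_feasibleRank hV hdisj]

lemma MaximalFeasible.exists_exchange_of_inter_color_subset (hV : V = univ.biUnion Vc)
    (hdisj : Pairwise (Disjoint on Vc)) (hS : MaximalFeasible V Vc ℓ u k S)
    (hT : MaximalFeasible V Vc ℓ u k T) (hxS : x ∈ S) (hxT : x ∉ T) (hxc : x ∈ Vc c)
    (hTc : T ∩ Vc c ⊆ S) : ∃ y ∈ T \ S, Feasible V Vc ℓ u k (insert y (S.erase x)) := by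
  have hssub : T ∩ Vc c ⊂ S ∩ Vc c :=
    (ssubset_iff_of_subset (subset_inter hTc inter_subset_right)).mpr
      ⟨x, mem_inter.mpr ⟨hxS, hxc⟩, fun h => hxT (mem_inter.mp h).1⟩
  have hslack : ℓ c < (S ∩ Vc c).card := (hT.1.2.2 c).1.trans_lt (card_lt_card hssub)
  have hlt : (S.erase x).card < T.card := by
    rw [card_erase_of_mem hxS, hT.card_eq_feasibleRank hV hdisj,
      ← hS.card_eq_feasibleRank hV hdisj]
    exact Nat.sub_lt (card_pos.mpr ⟨x, hxS⟩) one_pos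
  obtain ⟨y, hy, hfeas⟩ :=
    (hS.1.erase hdisj hxS hxc hslack).exists_insert_of_card_lt hV hdisj hT.1 hlt
  obtain ⟨hyT, hyS'⟩ := mem_sdiff.mp hy
  have hyx : y ≠ x := ne_of_mem_of_not_mem hyT hxT
  exact ⟨y, mem_sdiff.mpr ⟨hyT, fun hyS => hyS' (mem_erase.mpr ⟨hyx, hyS⟩)⟩, hfeas⟩

end ColorClasses

theorem maximal_feasible_exchange_general {α : Type*} [DecidableEq α] (C : ℕ) (V : Finset α)
    (Vc : Fin C → Finset α)
    (hV : V = Finset.univ.biUnion Vc)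
    (hdisj : ∀ c d : Fin C, c ≠ d → Disjoint (Vc c) (Vc d))
    (ℓ u : Fin C → ℕ) (k : ℕ)
    (B₁ B₂ : Finset α)
    (hB₁ : MaximalFeasible V Vc ℓ u k B₁)
    (hB₂ : MaximalFeasible V Vc ℓ u k B₂)
    (x : α) (hx : x ∈ B₁ \ B₂) :
    ∃ y ∈ B₂ \ B₁, MaximalFeasible V Vc ℓ u k (insert y (B₁.erase x)) := by
  have hdisj' : Pairwise (Function.onFun Disjoint Vc) := fun c d => hdisj c d
  obtain ⟨hx₁, hx₂⟩ := mem_sdiff.mp hx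
  obtain ⟨c, hxc⟩ := exists_mem_color hV (hB₁.1.1 hx₁)
  suffices ∃ y ∈ B₂ \ B₁, Feasible V Vc ℓ u k (insert y (B₁.erase x)) by
    obtain ⟨y, hy, hfeas⟩ := this
    exact ⟨y, hy, hB₁.insert_erase hV hdisj' hx₁ (mem_sdiff.mp hy).2 hfeas⟩
  by_cases hsame : ∃ y ∈ B₂ \ B₁, y ∈ Vc c
  · obtain ⟨y, hy, hyc⟩ := hsame
    exact ⟨y, hy, hB₁.1.insert_erase_of_mem_color hV hdisj' hx₁ hxc (mem_sdiff.mp hy).2 hyc⟩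
  · refine hB₁.exists_exchange_of_inter_color_subset hV hdisj' hB₂ hx₁ hx₂ hxc fun y hy => ?_
    obtain ⟨hy₂, hyc⟩ := mem_inter.mp hy
    exact by_contra fun hy₁ => hsame ⟨y, mem_sdiff.mpr ⟨hy₂, hy₁⟩, hyc⟩

/-- Basis exchange property for the inclusion-maximal sets of the feasible family. -/
theorem maximal_feasible_exchange {α : Type*} [DecidableEq α] (C : ℕ) (V : Finset α)
    (Vc : Fin C → Finset α)
    (hV : V = Finset.univ.biUnion Vc)
    (hdisj : ∀ c d : Fin C, c ≠ d → Disjoint (Vc c) (Vc d))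
    (ℓ u : Fin C → ℕ) (hlu : ∀ c, ℓ c ≤ u c) (k : ℕ)
    (hne : ∃ S, Feasible V Vc ℓ u k S)
    (B₁ B₂ : Finset α)
    (hB₁ : MaximalFeasible V Vc ℓ u k B₁)
    (hB₂ : MaximalFeasible V Vc ℓ u k B₂)
    (x : α) (hx : x ∈ B₁ \ B₂) :
    ∃ y ∈ B₂ \ B₁, MaximalFeasible V Vc ℓ u k (insert y (B₁.erase x)) :=
  maximal_feasible_exchange_general C V Vc hV hdisj ℓ u k B₁ B₂ hB₁ hB₂ x hx
end

section
/- Assume the feasible family F is nonempty. Then every inclusion-maximal set S ∈ F has cardinality |S| = min(k, Σ_{c=1}^C min(u_c, |V_c|)). -/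
/-!
Every feasible set satisfies `|S| ≤ k` and `|S ∩ V_c| ≤ min (u_c, |V_c|)` for each color, and
since the colors partition `V` the second bound sums to `|S| ≤ ∑ c, min (u_c, |V_c|)`.
Conversely, if `|S|` is below both bounds, then some color `c` has `|S ∩ V_c| < min (u_c, |V_c|)`;
adding a point of `V_c \ S` keeps `S` feasible (lower bounds only get easier), so `S` was not
maximal.
-/

open Finset

open Function

lemma card_eq_sum_card_inter_s3 {α ι : Type*} [DecidableEq α] [Fintype ι] {P : ι → Finset α}
    (hP : Pairwise (Disjoint on P)) {S : Finset α} (hS : S ⊆ univ.biUnion P) :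
    S.card = ∑ i, (S ∩ P i).card := by
  rw [← card_biUnion fun i _ j _ hij => (hP hij).mono inter_subset_right inter_subset_right,
    ← inter_biUnion, inter_eq_left.mpr hS]

section Feasible

variable {α : Type*} [DecidableEq α] {C : ℕ} {Vc : Fin C → Finset α} {ℓ u : Fin C → ℕ} {k : ℕ}
  {S : Finset α}

lemma Feasible.card_le_sum_min (hdisj : Pairwise (Disjoint on Vc))
    (hS : Feasible (univ.biUnion Vc) Vc ℓ u k S) :
    S.card ≤ ∑ c, min (u c) (Vc c).card := by
  obtain ⟨hSV, -, hSc⟩ := hS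
  rw [card_eq_sum_card_inter_s3 hdisj hSV]
  exact sum_le_sum fun c _ => le_min (hSc c).2 (card_le_card inter_subset_right)

lemma Feasible.insert_of_lt_s3 (hdisj : Pairwise (Disjoint on Vc))
    (hS : Feasible (univ.biUnion Vc) Vc ℓ u k S) {c : Fin C} {x : α} (hxc : x ∈ Vc c)
    (hxS : x ∉ S) (hk : S.card < k) (hu : (S ∩ Vc c).card < u c) :
    Feasible (univ.biUnion Vc) Vc ℓ u k (insert x S) := by
  obtain ⟨hSV, -, hSc⟩ := hS
  refine ⟨insert_subset (mem_biUnion.mpr ⟨c, mem_univ c, hxc⟩) hSV, ?_, fun d => ?_⟩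
  · rw [card_insert_of_notMem hxS]
    exact hk
  · rcases eq_or_ne d c with rfl | hdc
    · rw [insert_inter_of_mem hxc, card_insert_of_notMem fun h => hxS (mem_inter.mp h).1]
      exact ⟨(hSc d).1.trans (Nat.le_succ _), hu⟩
    · rw [insert_inter_of_notMem fun hxd => disjoint_left.mp (hdisj hdc.symm) hxc hxd]
      exact hSc d

lemma Feasible.exists_insert_of_card_lt_s3 (hdisj : Pairwise (Disjoint on Vc))
    (hS : Feasible (univ.biUnion Vc) Vc ℓ u k S)
    (hlt : S.card < min k (∑ c, min (u c) (Vc c).card)) :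
    ∃ x ∉ S, Feasible (univ.biUnion Vc) Vc ℓ u k (insert x S) := by
  have hk : S.card < k := hlt.trans_le (min_le_left _ _)
  have hsum : ∑ c, (S ∩ Vc c).card < ∑ c, min (u c) (Vc c).card := by
    rw [← card_eq_sum_card_inter_s3 hdisj hS.1]
    exact hlt.trans_le (min_le_right _ _)
  obtain ⟨c, -, hc⟩ := exists_lt_of_sum_lt hsum
  obtain ⟨x, hxc, hxSc⟩ := exists_mem_notMem_of_card_lt_card (hc.trans_le (min_le_right _ _))
  have hxS : x ∉ S := fun hxS => hxSc (mem_inter.mpr ⟨hxS, hxc⟩)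
  exact ⟨x, hxS, hS.insert_of_lt_s3 hdisj hxc hxS hk (hc.trans_le (min_le_left _ _))⟩

end Feasible

theorem maximal_feasible_card_general {α : Type*} [DecidableEq α] (C : ℕ) (V : Finset α)
    (Vc : Fin C → Finset α)
    (hV : V = Finset.univ.biUnion Vc)
    (hdisj : ∀ c d : Fin C, c ≠ d → Disjoint (Vc c) (Vc d))
    (ℓ u : Fin C → ℕ) (k : ℕ)
    (S : Finset α)
    (hS : Feasible V Vc ℓ u k S)
    (hmax : ∀ S', Feasible V Vc ℓ u k S' → S ⊆ S' → S' = S) :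
    S.card = min k (∑ c, min (u c) (Vc c).card) := by
  subst hV
  have hdisj' : Pairwise (Disjoint on Vc) := fun c d hcd => hdisj c d hcd
  refine le_antisymm (le_min hS.2.1 (hS.card_le_sum_min hdisj')) (not_lt.mp fun hlt => ?_)
  obtain ⟨x, hxS, hfeas⟩ := hS.exists_insert_of_card_lt_s3 hdisj' hlt
  exact hxS (hmax _ hfeas (subset_insert x S) ▸ mem_insert_self x S)

/-- Every inclusion-maximal feasible set has cardinality
`min k (∑ c, min (u c) |Vc c|)`. -/
theorem maximal_feasible_card {α : Type*} [DecidableEq α] (C : ℕ) (V : Finset α)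
    (Vc : Fin C → Finset α)
    (hV : V = Finset.univ.biUnion Vc)
    (hdisj : ∀ c d : Fin C, c ≠ d → Disjoint (Vc c) (Vc d))
    (ℓ u : Fin C → ℕ) (hlu : ∀ c, ℓ c ≤ u c) (k : ℕ)
    (hne : ∃ S, Feasible V Vc ℓ u k S)
    (S : Finset α)
    (hS : Feasible V Vc ℓ u k S)
    (hmax : ∀ S', Feasible V Vc ℓ u k S' → S ⊆ S' → S' = S) :
    S.card = min k (∑ c, min (u c) (Vc c).card) :=
  maximal_feasible_card_general C V Vc hV hdisj ℓ u k S hS hmax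
end

section
/- Let G, O ∈ F with |G| = |O| = k. Let g ∈ G and o ∈ O with o ∉ G \ {g}, and suppose that either g and o have the same color, or, writing c₁ for the color of g and c₂ for the color of o, both |G ∩ V_{c₁}| > |O ∩ V_{c₁}| and |G ∩ V_{c₂}| < |O ∩ V_{c₂}| hold. Then (G \ {g}) ∪ {o} ∈ F. -/
open Finset

/-! Swapping `g` for `o` changes the number of elements of color `c` by `[o ∈ V_c] - [g ∈ V_c]`.
This can only break a lower bound at the color of `g` and an upper bound at the color of `o`;
when the colors differ, the counts of `O` leave room for both changes. -/

namespace Finset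

variable {α : Type*} [DecidableEq α] {s t : Finset α} {a b : α}

theorem card_insert_erase_inter_add (ha : a ∈ s) (hb : b ∉ s.erase a) :
    #(insert b (s.erase a) ∩ t) + (if a ∈ t then 1 else 0) =
      #(s ∩ t) + (if b ∈ t then 1 else 0) := by
  have hb' : b ∉ (s ∩ t).erase a := fun h => hb (erase_subset_erase a inter_subset_left h)
  have hcard : #((s ∩ t).erase a) + (if a ∈ t then 1 else 0) = #(s ∩ t) := by
    split_ifs with hat
    · exact card_erase_add_one (mem_inter.2 ⟨ha, hat⟩)
    · rw [erase_eq_of_notMem fun h => hat (mem_inter.1 h).2, add_zero]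
  rw [← hcard]
  by_cases hbt : b ∈ t
  · rw [if_pos hbt, insert_inter_of_mem hbt, erase_inter, card_insert_of_notMem hb',
      add_right_comm]
  · rw [if_neg hbt, insert_inter_of_notMem hbt, erase_inter, add_zero]

theorem card_insert_erase_le (ha : a ∈ s) : #(insert b (s.erase a)) ≤ #s :=
  (card_insert_le _ _).trans_eq (card_erase_add_one ha)

end Finset

theorem mem_iff_eq_of_pairwise_disjoint {α ι : Type*} {Vc : ι → Finset α}
    (hdisj : ∀ c d, c ≠ d → Disjoint (Vc c) (Vc d)) {x : α} {c₀ : ι} (hx : x ∈ Vc c₀)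
    (c : ι) : x ∈ Vc c ↔ c = c₀ :=
  ⟨fun h => by_contra fun hc => disjoint_left.1 (hdisj c c₀ hc) h hx, fun h => h ▸ hx⟩

theorem feasible_swap_general {α : Type*} [DecidableEq α] (C : ℕ) (V : Finset α)
    (Vc : Fin C → Finset α)
    (hdisj : ∀ c d : Fin C, c ≠ d → Disjoint (Vc c) (Vc d))
    (ℓ u : Fin C → ℕ) (k : ℕ)
    (G O : Finset α)
    (hG : Feasible V Vc ℓ u k G) (hO : Feasible V Vc ℓ u k O)
    (g o : α) (hg : g ∈ G) (ho : o ∈ O) (hno : o ∉ G.erase g)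
    (c₁ c₂ : Fin C) (hgc : g ∈ Vc c₁) (hoc : o ∈ Vc c₂)
    (hcond : c₁ = c₂ ∨
      ((O ∩ Vc c₁).card < (G ∩ Vc c₁).card ∧ (G ∩ Vc c₂).card < (O ∩ Vc c₂).card)) :
    Feasible V Vc ℓ u k (insert o (G.erase g)) := by
  obtain ⟨hGV, hGk, hGc⟩ := hG
  refine ⟨insert_subset (hO.1 ho) ((erase_subset g G).trans hGV),
    (card_insert_erase_le hg).trans hGk, fun c => ?_⟩
  have hcount := card_insert_erase_inter_add (t := Vc c) hg hno
  simp only [mem_iff_eq_of_pairwise_disjoint hdisj hgc,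
    mem_iff_eq_of_pairwise_disjoint hdisj hoc] at hcount
  have hGc₁ := hGc c₁
  have hGc₂ := hGc c₂
  have hOc₁ := hO.2.2 c₁
  have hOc₂ := hO.2.2 c₂
  have hGc := hGc c
  rcases hcond with rfl | hcond
  · simp only [add_left_inj] at hcount
    omega
  · split_ifs at hcount with hc₁ hc₂ hc₂ <;> subst_vars <;> omega

/-- Swapping an element `g` of a feasible `k`-set `G` for an element `o` of a feasible
`k`-set `O` preserves feasibility, provided `g` and `o` have the same color, or `G` has
strictly more elements than `O` of the color of `g` and strictly fewer of the color of `o`. -/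
theorem feasible_swap {α : Type*} [DecidableEq α] (C : ℕ) (V : Finset α)
    (Vc : Fin C → Finset α)
    (hV : V = Finset.univ.biUnion Vc)
    (hdisj : ∀ c d : Fin C, c ≠ d → Disjoint (Vc c) (Vc d))
    (ℓ u : Fin C → ℕ) (hlu : ∀ c, ℓ c ≤ u c) (k : ℕ)
    (G O : Finset α)
    (hG : Feasible V Vc ℓ u k G) (hO : Feasible V Vc ℓ u k O)
    (hGk : G.card = k) (hOk : O.card = k)
    (g o : α) (hg : g ∈ G) (ho : o ∈ O) (hno : o ∉ G.erase g)
    (c₁ c₂ : Fin C) (hgc : g ∈ Vc c₁) (hoc : o ∈ Vc c₂)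
    (hcond : c₁ = c₂ ∨
      ((O ∩ Vc c₁).card < (G ∩ Vc c₁).card ∧ (G ∩ Vc c₂).card < (O ∩ Vc c₂).card)) :
    Feasible V Vc ℓ u k (insert o (G.erase g)) :=
  feasible_swap_general C V Vc hdisj ℓ u k G O hG hO g o hg ho hno c₁ c₂ hgc hoc hcond
end

section
/- Let G, O ⊆ V be finite sets with |G| = |O|. Then there exists a bijection σ : G → O such that for every g ∈ G, either g and σ(g) have the same color, or, writing c₁ for the color of g and c₂ for the color of σ(g), both |G ∩ V_{c₁}| > |O ∩ V_{c₁}| and |G ∩ V_{c₂}| < |O ∩ V_{c₂}| hold. -/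
/-!
Pair off an element of `G` with an element of `O` of the same color for as long as some color
meets both sets. Removing such a pair lowers both counts of that color by one, so it changes no
comparison `|G ∩ V_c|` vs `|O ∩ V_c|`. Once no color meets both sets, every color met by the
remaining part of `G` is absent from `O` and vice versa, so an arbitrary bijection works.
-/

open Finset Function

section

variable {α ι : Type*}

theorem Finset.exists_bijOn_of_card_eq {s t : Finset α} (h : s.card = t.card) :
    ∃ f : α → α, Set.BijOn f s t := by
  rcases isEmpty_or_nonempty α with hα | hα
  · exact ⟨id, by simp [Finset.eq_empty_of_isEmpty]⟩
  · exact s.finite_toSet.exists_bijOn_of_encard_eq (by simp [Set.encard_coe_eq_coe_finsetCard, h])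

theorem Pairwise.mem_iff_of_mem_of_mem {Vc : ι → Finset α} (hdisj : Pairwise (Disjoint on Vc))
    {a b : α} {c : ι} (ha : a ∈ Vc c) (hb : b ∈ Vc c) (d : ι) : a ∈ Vc d ↔ b ∈ Vc d := by
  rcases eq_or_ne d c with rfl | hdc
  · exact iff_of_true ha hb
  · exact iff_of_false (disjoint_right.1 (hdisj hdc) ha) (disjoint_right.1 (hdisj hdc) hb)

variable [DecidableEq α]

theorem Set.BijOn.update_of_erase {f : α → α} {s t : Finset α} {a b : α} (ha : a ∈ s)
    (hb : b ∈ t) (hf : Set.BijOn f (s.erase a) (t.erase b)) :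
    Set.BijOn (update f a b) s t := by
  have hupd : Set.BijOn (update f a b) (s.erase a) (t.erase b) :=
    hf.congr fun x hx => (update_of_ne (ne_of_mem_erase hx) ..).symm
  have hins := hupd.insert (a := a) (by simp)
  rwa [update_self, ← coe_insert, ← coe_insert, insert_erase ha, insert_erase hb] at hins

theorem Finset.card_erase_inter_lt_iff {s t X : Finset α} {a b : α} (ha : a ∈ s) (hb : b ∈ t)
    (hX : a ∈ X ↔ b ∈ X) :
    (s.erase a ∩ X).card < (t.erase b ∩ X).card ↔ (s ∩ X).card < (t ∩ X).card := by
  rw [erase_inter, erase_inter]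
  by_cases haX : a ∈ X
  · have hsX : a ∈ s ∩ X := mem_inter.2 ⟨ha, haX⟩
    have htX : b ∈ t ∩ X := mem_inter.2 ⟨hb, hX.1 haX⟩
    rw [card_erase_of_mem hsX, card_erase_of_mem htX]
    have := card_pos.2 ⟨a, hsX⟩
    have := card_pos.2 ⟨b, htX⟩
    omega
  · rw [erase_eq_of_notMem fun h => haX (mem_inter.1 h).2,
      erase_eq_of_notMem fun h => haX (hX.2 (mem_inter.1 h).2)]

def ColorCompatible (Vc : ι → Finset α) (G O : Finset α) (g o : α) : Prop :=
  (∃ c, g ∈ Vc c ∧ o ∈ Vc c) ∨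
    ∀ c₁ c₂, g ∈ Vc c₁ → o ∈ Vc c₂ →
      (O ∩ Vc c₁).card < (G ∩ Vc c₁).card ∧ (G ∩ Vc c₂).card < (O ∩ Vc c₂).card

namespace ColorCompatible

variable {Vc : ι → Finset α} {G O : Finset α} {g o x y : α}

theorem of_erase (h : ColorCompatible Vc (G.erase g) (O.erase o) x y) (hg : g ∈ G) (ho : o ∈ O)
    (hgo : ∀ d, g ∈ Vc d ↔ o ∈ Vc d) : ColorCompatible Vc G O x y := by
  refine h.imp id fun hlt c₁ c₂ hx hy => ?_
  obtain ⟨h₁, h₂⟩ := hlt c₁ c₂ hx hy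
  exact ⟨(card_erase_inter_lt_iff ho hg (hgo c₁).symm).1 h₁,
    (card_erase_inter_lt_iff hg ho (hgo c₂)).1 h₂⟩

theorem of_forall_notMem (hnone : ∀ c, ∀ a ∈ G, ∀ b ∈ O, a ∈ Vc c → b ∉ Vc c) (hg : g ∈ G)
    (ho : o ∈ O) : ColorCompatible Vc G O g o := by
  refine Or.inr fun c₁ c₂ h₁ h₂ => ⟨?_, ?_⟩
  · rw [card_eq_zero.2 (eq_empty_of_forall_notMem fun b hb =>
      hnone c₁ g hg b (mem_inter.1 hb).1 h₁ (mem_inter.1 hb).2)]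
    exact card_pos.2 ⟨g, mem_inter.2 ⟨hg, h₁⟩⟩
  · rw [card_eq_zero.2 (eq_empty_of_forall_notMem fun a ha =>
      hnone c₂ a (mem_inter.1 ha).1 o ho (mem_inter.1 ha).2 h₂)]
    exact card_pos.2 ⟨o, mem_inter.2 ⟨ho, h₂⟩⟩

end ColorCompatible

theorem exists_bijOn_colorCompatible {Vc : ι → Finset α} (hdisj : Pairwise (Disjoint on Vc))
    (G O : Finset α) (hcard : G.card = O.card) :
    ∃ f : α → α, Set.BijOn f G O ∧ ∀ g ∈ G, ColorCompatible Vc G O g (f g) := by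
  induction G using Finset.strongInduction generalizing O with
  | H G ih =>
  by_cases hshared : ∃ c, ∃ g ∈ G, ∃ o ∈ O, g ∈ Vc c ∧ o ∈ Vc c
  · obtain ⟨c, g, hg, o, ho, hgc, hoc⟩ := hshared
    obtain ⟨f, hf, hcompat⟩ := ih (G.erase g) (erase_ssubset hg) (O.erase o)
      (by rw [card_erase_of_mem hg, card_erase_of_mem ho, hcard])
    refine ⟨update f g o, hf.update_of_erase hg ho, fun x hx => ?_⟩
    rcases eq_or_ne x g with rfl | hxg
    · exact Or.inl ⟨c, hgc, by rwa [update_self]⟩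
    · rw [update_of_ne hxg]
      exact (hcompat x (mem_erase.2 ⟨hxg, hx⟩)).of_erase hg ho
        (hdisj.mem_iff_of_mem_of_mem hgc hoc)
  · push Not at hshared
    obtain ⟨f, hf⟩ := exists_bijOn_of_card_eq hcard
    exact ⟨f, hf, fun g hg => .of_forall_notMem hshared hg (hf.mapsTo hg)⟩

end

theorem color_matching_general {α : Type*} [DecidableEq α] (C : ℕ)
    (Vc : Fin C → Finset α)
    (hdisj : ∀ c d : Fin C, c ≠ d → Disjoint (Vc c) (Vc d))
    (G O : Finset α) (hcard : G.card = O.card) :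
    ∃ σ : G → O, Function.Bijective σ ∧
      ∀ g : G,
        (∃ c, (g : α) ∈ Vc c ∧ ((σ g : α)) ∈ Vc c) ∨
        (∀ c₁ c₂ : Fin C, (g : α) ∈ Vc c₁ → ((σ g : α)) ∈ Vc c₂ →
          (O ∩ Vc c₁).card < (G ∩ Vc c₁).card ∧ (G ∩ Vc c₂).card < (O ∩ Vc c₂).card) := by
  obtain ⟨f, hf, hcompat⟩ := exists_bijOn_colorCompatible (fun c d => hdisj c d) G O hcard
  exact ⟨hf.mapsTo.restrict f G O, hf.bijective, fun g => hcompat g g.2⟩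

/-- Given equal-cardinality subsets `G, O` of a colored ground set `V`, there is a bijection
`σ : G → O` such that every `g` is matched either to an element of the same color, or to an
element whose color is strictly under-represented in `G` relative to `O`, while the color of
`g` is strictly over-represented in `G` relative to `O`. -/
theorem color_matching {α : Type*} [DecidableEq α] (C : ℕ) (V : Finset α)
    (Vc : Fin C → Finset α)
    (hV : V = Finset.univ.biUnion Vc)
    (hdisj : ∀ c d : Fin C, c ≠ d → Disjoint (Vc c) (Vc d))
    (G O : Finset α) (hG : G ⊆ V) (hO : O ⊆ V) (hcard : G.card = O.card) :
    ∃ σ : G → O, Function.Bijective σ ∧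
      ∀ g : G,
        (∃ c, (g : α) ∈ Vc c ∧ ((σ g : α)) ∈ Vc c) ∨
        (∀ c₁ c₂ : Fin C, (g : α) ∈ Vc c₁ → ((σ g : α)) ∈ Vc c₂ →
          (O ∩ Vc c₁).card < (G ∩ Vc c₁).card ∧ (G ∩ Vc c₂).card < (O ∩ Vc c₂).card) :=
  color_matching_general C Vc hdisj G O hcard
end

section
/- Let f : 2^V → ℝ be a monotone submodular function on a finite set V. Let g₁,…,g_m ∈ V be distinct and o₁,…,o_m ∈ V be distinct, and set G_j = {g₁,…,g_j}, G = G_m, and O = {o₁,…,o_m}. If f(g_j | G_{j−1}) ≥ f(o_j | G_{j−1}) for every j = 1,…,m, then 2 f(G) ≥ f(G ∪ O) + f(∅). -/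
open Finset

/-- `prefixImage m g j = {g i : i < j}`, the set of the first `j` elements of the
sequence `g`. -/
def prefixImage {α : Type*} [DecidableEq α] (m : ℕ) (g : Fin m → α) (j : ℕ) : Finset α :=
  (Finset.univ.filter fun i : Fin m => (i : ℕ) < j).image g

lemma prefixImage_zero {α : Type*} [DecidableEq α] (m : ℕ) (g : Fin m → α) :
    prefixImage m g 0 = ∅ := by
  simp [prefixImage]

lemma prefixImage_succ {α : Type*} [DecidableEq α] (m : ℕ) (g : Fin m → α) (j : ℕ)
    (hj : j < m) :
    prefixImage m g (j + 1) = insert (g ⟨j, hj⟩) (prefixImage m g j) := by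
  ext a
  simp only [prefixImage, mem_image, mem_filter, mem_univ, true_and, mem_insert]
  constructor
  · rintro ⟨i, hi, rfl⟩
    rcases Nat.lt_succ_iff_lt_or_eq.mp hi with h | h
    · exact Or.inr ⟨i, h, rfl⟩
    · left; congr 1; exact (Fin.ext h.symm).symm
  · rintro (rfl | ⟨i, hi, rfl⟩)
    · exact ⟨⟨j, hj⟩, Nat.lt_succ_self j, rfl⟩
    · exact ⟨i, Nat.lt_succ_of_lt hi, rfl⟩

lemma prefixImage_mono {α : Type*} [DecidableEq α] (m : ℕ) (g : Fin m → α) {j k : ℕ}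
    (hjk : j ≤ k) : prefixImage m g j ⊆ prefixImage m g k := by
  intro a ha
  simp only [prefixImage, mem_image, mem_filter, mem_univ, true_and] at ha ⊢
  obtain ⟨i, hi, rfl⟩ := ha
  exact ⟨i, lt_of_lt_of_le hi hjk, rfl⟩

lemma prefixImage_top {α : Type*} [DecidableEq α] (m : ℕ) (g : Fin m → α) :
    prefixImage m g m = Finset.univ.image g := by
  simp [prefixImage, Fin.is_lt]

/-- If `f` is monotone and submodular, `g₁,…,g_m` are distinct, `o₁,…,o_m` are distinct,
and at every step `j` the marginal gain of `g j` over the prefix `{g₁,…,g_{j-1}}` is at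
least that of `o j`, then `2 f(G) ≥ f(G ∪ O) + f(∅)` where `G = {g₁,…,g_m}` and
`O = {o₁,…,o_m}`. -/
theorem greedy_half {α : Type*} [Fintype α] [DecidableEq α]
    (f : Finset α → ℝ)
    (hmono : ∀ X Y : Finset α, X ⊆ Y → f X ≤ f Y)
    (hsub : ∀ X Y : Finset α, X ⊆ Y → ∀ e ∉ Y,
      f (insert e X) - f X ≥ f (insert e Y) - f Y)
    (m : ℕ) (g o : Fin m → α)
    (hg : Function.Injective g) (ho : Function.Injective o)
    (hgain : ∀ j : Fin m,
      f (insert (g j) (prefixImage m g j)) - f (prefixImage m g j) ≥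
      f (insert (o j) (prefixImage m g j)) - f (prefixImage m g j)) :
    2 * f (prefixImage m g m) ≥
      f (prefixImage m g m ∪ Finset.univ.image o) + f ∅ := by
  set G := prefixImage m g m with hG
  have key : ∀ j, j ≤ m →
      f (G ∪ prefixImage m o j) + f ∅ ≤ f G + f (prefixImage m g j) := by
    intro j
    induction j with
    | zero => intro _; simp [prefixImage_zero]
    | succ j ih =>
      intro hj
      have hjm : j < m := hj
      have ihj := ih (le_of_lt hjm)
      set jj : Fin m := ⟨j, hjm⟩ with hjj
      have hOs : prefixImage m o (j + 1) = insert (o jj) (prefixImage m o j) :=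
        prefixImage_succ m o j hjm
      have hGs : prefixImage m g (j + 1) = insert (g jj) (prefixImage m g j) :=
        prefixImage_succ m g j hjm
      have hGjG : prefixImage m g j ⊆ G := prefixImage_mono m g (le_of_lt hjm)
      have hunion : G ∪ prefixImage m o (j + 1) =
          insert (o jj) (G ∪ prefixImage m o j) := by
        rw [hOs, Finset.union_insert]
      by_cases hmem : o jj ∈ G ∪ prefixImage m o j
      · have : insert (o jj) (G ∪ prefixImage m o j) = G ∪ prefixImage m o j :=
          Finset.insert_eq_self.mpr hmem
        rw [hunion, this]
        have hmonoG : f (prefixImage m g j) ≤ f (prefixImage m g (j + 1)) := by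
          apply hmono
          rw [hGs]; exact Finset.subset_insert _ _
        linarith
      · have hsubm := hsub (prefixImage m g j) (G ∪ prefixImage m o j)
          (hGjG.trans Finset.subset_union_left) (o jj) hmem
        have hg' := hgain jj
        rw [hunion, hGs]
        linarith
  have hkey := key m le_rfl
  rw [prefixImage_top m o] at hkey
  linarith
end

section
/- Let V be a finite set, let g : 2^V → ℝ be a non-negative submodular function, let p ∈ [0,1], and let B be a random subset of V (a measurable map from a probability space to subsets of V) such that P[e ∈ B] ≤ p for every e ∈ V. Then E[g(B)] ≥ (1 − p) · g(∅). -/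
open Finset MeasureTheory

theorem key_lemma {α : Type*} [Fintype α] [DecidableEq α]
    (g : Finset α → ℝ)
    (hnonneg : ∀ S : Finset α, 0 ≤ g S)
    (hsub : ∀ X Y : Finset α, X ⊆ Y → ∀ e ∉ Y,
      g (insert e X) - g X ≥ g (insert e Y) - g Y) :
    ∀ U : Finset α, ∀ w : Finset α → ℝ, (∀ S, 0 ≤ w S) → (∀ S, w S ≠ 0 → S ⊆ U) →
      ∀ q Mq : ℝ, 0 ≤ q → 0 ≤ Mq →
      (∀ f ∈ U, q ≤ ∑ S ∈ univ.filter (fun S => f ∈ S), w S ∧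
        ∑ S ∈ univ.filter (fun S => f ∈ S), w S ≤ Mq) →
      ∑ S, w S * g S ≥ (∑ S, w S) * g ∅ - Mq * g ∅ + q * g U
        - (if U = ∅ then q * g ∅ else 0) := by
  intro U
  induction U using Finset.strongInduction with
  | _ U ih =>
  intro w hw hsupp q Mq hq hMq hxb
  by_cases hU : U = ∅
  · subst hU
    have h1 : ∑ S, w S * g S = w ∅ * g ∅ := by
      apply Finset.sum_eq_single
      · intro S _ hS
        have : w S = 0 := by
          by_contra h
          exact hS (Finset.subset_empty.mp (hsupp S h))
        rw [this, zero_mul]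
      · intro h; exact absurd (Finset.mem_univ _) h
    have h2 : ∑ S, w S = w ∅ := by
      apply Finset.sum_eq_single
      · intro S _ hS
        by_contra h
        exact hS (Finset.subset_empty.mp (hsupp S h))
      · intro h; exact absurd (Finset.mem_univ _) h
    rw [h1, h2, if_pos rfl]
    nlinarith [hnonneg (∅ : Finset α)]
  · obtain ⟨e, heU, hemin⟩ := U.exists_min_image
      (fun f => ∑ S ∈ univ.filter (fun S => f ∈ S), w S)
      (Finset.nonempty_iff_ne_empty.2 hU)
    -- bijection helper
    have hbij : ∀ (p : Finset α → Prop) (_ : DecidablePred p) (h : Finset α → ℝ),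
        (∀ S : Finset α, e ∉ S → (p S ↔ p (insert e S))) →
        ∑ S ∈ univ.filter (fun S => p S ∧ e ∉ S), h (insert e S)
          = ∑ S ∈ univ.filter (fun S => p S ∧ e ∈ S), h S := by
      intro p _ h hp
      have himg : (univ.filter (fun S => p S ∧ e ∉ S)).image (insert e)
          = univ.filter (fun S => p S ∧ e ∈ S) := by
        ext T
        simp only [Finset.mem_image, Finset.mem_filter, Finset.mem_univ, true_and]
        constructor
        · rintro ⟨S, ⟨hpS, heS⟩, rfl⟩
          exact ⟨(hp S heS).1 hpS, Finset.mem_insert_self e S⟩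
        · rintro ⟨hpT, heT⟩
          refine ⟨T.erase e, ⟨?_, Finset.notMem_erase e T⟩, Finset.insert_erase heT⟩
          rw [hp _ (Finset.notMem_erase e T), Finset.insert_erase heT]
          exact hpT
      have hinj : ∀ x ∈ univ.filter (fun S => p S ∧ e ∉ S),
          ∀ y ∈ univ.filter (fun S => p S ∧ e ∉ S), insert e x = insert e y → x = y := by
        intro x hx y hy hxy
        simp only [Finset.mem_filter, Finset.mem_univ, true_and] at hx hy
        have := congrArg (fun S => Finset.erase S e) hxy
        simpa [Finset.erase_insert hx.2, Finset.erase_insert hy.2] using this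
      rw [← himg, Finset.sum_image hinj]

    classical
    set xe : ℝ := ∑ S ∈ univ.filter (fun S => e ∈ S), w S with hxe_def
    have hxe0 : 0 ≤ xe := Finset.sum_nonneg (fun S _ => hw S)
    have hsplit : ∀ h : Finset α → ℝ, ∑ S, h S
        = ∑ S ∈ univ.filter (fun S => e ∈ S), h S
          + ∑ S ∈ univ.filter (fun S => e ∉ S), h S :=
      fun h => (Finset.sum_filter_add_sum_filter_not univ (fun S => e ∈ S) h).symm
    have hbijT : ∀ h : Finset α → ℝ,
        ∑ S ∈ univ.filter (fun S => e ∉ S), h (insert e S)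
          = ∑ S ∈ univ.filter (fun S => e ∈ S), h S := by
      intro h
      have := hbij (fun _ => True) (fun _ => inferInstance) h (fun S _ => Iff.rfl)
      simpa using this
    set w' : Finset α → ℝ := fun S => if e ∈ S then 0 else w S + w (insert e S) with hw'_def
    have hw' : ∀ S, 0 ≤ w' S := by
      intro S
      by_cases h : e ∈ S <;> simp [hw'_def, h]
      exact add_nonneg (hw S) (hw (insert e S))
    have hsupp' : ∀ S, w' S ≠ 0 → S ⊆ U.erase e := by
      intro S h
      by_cases heS : e ∈ S
      · simp [hw'_def, heS] at h
      · rw [Finset.subset_erase]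
        refine ⟨?_, heS⟩
        by_cases h1 : w S = 0
        · have h2 : w (insert e S) ≠ 0 := by
            intro h2; apply h; simp [hw'_def, heS, h1, h2]
          exact (Finset.subset_insert e S).trans (hsupp _ h2)
        · exact hsupp S h1
    have hw'eq : ∀ h : Finset α → ℝ, ∑ S, w' S * h S
        = ∑ S ∈ univ.filter (fun S => e ∉ S), w S * h S
          + ∑ S ∈ univ.filter (fun S => e ∈ S), w S * h (S.erase e) := by
      intro h
      rw [hsplit (fun S => w' S * h S)]
      have h1 : ∑ S ∈ univ.filter (fun S => e ∈ S), w' S * h S = 0 := by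
        apply Finset.sum_eq_zero
        intro S hS
        simp only [Finset.mem_filter, Finset.mem_univ, true_and] at hS
        simp [hw'_def, hS]
      have h3 : ∑ S ∈ univ.filter (fun S => e ∉ S), w (insert e S) * h S
          = ∑ S ∈ univ.filter (fun S => e ∈ S), w S * h (S.erase e) := by
        rw [← hbijT (fun T => w T * h (T.erase e))]
        apply Finset.sum_congr rfl
        intro S hS
        simp only [Finset.mem_filter, Finset.mem_univ, true_and] at hS
        rw [Finset.erase_insert hS]
      have h2 : ∑ S ∈ univ.filter (fun S => e ∉ S), w' S * h S
          = ∑ S ∈ univ.filter (fun S => e ∉ S), w S * h S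
            + ∑ S ∈ univ.filter (fun S => e ∉ S), w (insert e S) * h S := by
        rw [← Finset.sum_add_distrib]
        apply Finset.sum_congr rfl
        intro S hS
        simp only [Finset.mem_filter, Finset.mem_univ, true_and] at hS
        simp [hw'_def, hS]
        ring
      rw [h1, h2, h3]
      ring
    have ht' : ∑ S, w' S = ∑ S, w S := by
      have h1 := hw'eq (fun _ => 1)
      simp only [mul_one] at h1
      rw [h1, hsplit w]
      ring
    have hx'eq : ∀ f, f ≠ e →
        ∑ S ∈ univ.filter (fun S => f ∈ S), w' S
          = ∑ S ∈ univ.filter (fun S => f ∈ S), w S := by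
      intro f hf
      have hsplitf : ∀ v : Finset α → ℝ, ∑ S ∈ univ.filter (fun S => f ∈ S), v S
          = ∑ S ∈ univ.filter (fun S => f ∈ S ∧ e ∈ S), v S
            + ∑ S ∈ univ.filter (fun S => f ∈ S ∧ e ∉ S), v S := by
        intro v
        rw [← Finset.sum_filter_add_sum_filter_not (univ.filter (fun S => f ∈ S))
          (fun S => e ∈ S) v, Finset.filter_filter, Finset.filter_filter]
      rw [hsplitf w', hsplitf w]
      have h1 : ∑ S ∈ univ.filter (fun S => f ∈ S ∧ e ∈ S), w' S = 0 := by
        apply Finset.sum_eq_zero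
        intro S hS
        simp only [Finset.mem_filter, Finset.mem_univ, true_and] at hS
        simp [hw'_def, hS.2]
      have h2 : ∑ S ∈ univ.filter (fun S => f ∈ S ∧ e ∉ S), w' S
          = ∑ S ∈ univ.filter (fun S => f ∈ S ∧ e ∉ S), w S
            + ∑ S ∈ univ.filter (fun S => f ∈ S ∧ e ∉ S), w (insert e S) := by
        rw [← Finset.sum_add_distrib]
        apply Finset.sum_congr rfl
        intro S hS
        simp only [Finset.mem_filter, Finset.mem_univ, true_and] at hS
        simp [hw'_def, hS.2]
      have h3 : ∑ S ∈ univ.filter (fun S => f ∈ S ∧ e ∉ S), w (insert e S)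
          = ∑ S ∈ univ.filter (fun S => f ∈ S ∧ e ∈ S), w S := by
        apply hbij (fun S => f ∈ S) (fun _ => inferInstance) w
        intro S heS
        simp [Finset.mem_insert, hf]
      rw [h1, h2, h3]
      ring
    -- the key pointwise inequality summed over sets containing e
    have key1 : ∑ S ∈ univ.filter (fun S => e ∈ S), w S * g S
        ≥ ∑ S ∈ univ.filter (fun S => e ∈ S), w S * g (S.erase e)
          + xe * (g U - g (U.erase e)) := by
      have hle : ∑ S ∈ univ.filter (fun S => e ∈ S),
          (w S * g (S.erase e) + w S * (g U - g (U.erase e)))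
          ≤ ∑ S ∈ univ.filter (fun S => e ∈ S), w S * g S := by
        apply Finset.sum_le_sum
        intro S hS
        simp only [Finset.mem_filter, Finset.mem_univ, true_and] at hS
        rcases eq_or_ne (w S) 0 with h0 | h0
        · simp [h0]
        · have hSU := hsupp S h0
          have hmarg := hsub (S.erase e) (U.erase e)
            (Finset.erase_subset_erase e hSU) e (Finset.notMem_erase e U)
          rw [Finset.insert_erase hS, Finset.insert_erase heU] at hmarg
          nlinarith [hw S]
      rw [Finset.sum_add_distrib, ← Finset.sum_mul] at hle
      rw [hxe_def]
      linarith
    have hchain : ∑ S, w S * g S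
        ≥ ∑ S, w' S * g S + xe * (g U - g (U.erase e)) := by
      have hA := hsplit (fun S => w S * g S)
      have hB := hw'eq g
      linarith
    have hqxe : q ≤ xe := (hxb e heU).1
    have hxeMq : xe ≤ Mq := (hxb e heU).2
    rw [if_neg hU]
    by_cases h2 : U.erase e = ∅
    · have IH := ih (U.erase e) (Finset.erase_ssubset heU) w' hw' hsupp' xe 0 hxe0
        le_rfl (by intro f hf; rw [h2] at hf; exact absurd hf (Finset.notMem_empty f))
      rw [if_pos h2, h2, ht'] at IH
      rw [h2] at hchain
      have p1 : q * g U ≤ xe * g U := mul_le_mul_of_nonneg_right hqxe (hnonneg U)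
      have p2 : xe * g ∅ ≤ Mq * g ∅ := mul_le_mul_of_nonneg_right hxeMq (hnonneg ∅)
      linarith
    · have IH := ih (U.erase e) (Finset.erase_ssubset heU) w' hw' hsupp' xe Mq hxe0
        hMq (by
          intro f hf
          have hfU := Finset.mem_of_mem_erase hf
          have hfe : f ≠ e := Finset.ne_of_mem_erase hf
          rw [hx'eq f hfe]
          exact ⟨hemin f hfU, (hxb f hfU).2⟩)
      rw [if_neg h2, ht'] at IH
      have p1 : q * g U ≤ xe * g U := mul_le_mul_of_nonneg_right hqxe (hnonneg U)
      linarith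



/-- If `g` is a non-negative submodular function and `B` is a random subset containing
each element with probability at most `p`, then `E[g(B)] ≥ (1 - p) g(∅)`. -/
theorem random_subset_lower_bound {α : Type*} [Fintype α] [DecidableEq α]
    (g : Finset α → ℝ)
    (hnonneg : ∀ S : Finset α, 0 ≤ g S)
    (hsub : ∀ X Y : Finset α, X ⊆ Y → ∀ e ∉ Y,
      g (insert e X) - g X ≥ g (insert e Y) - g Y)
    (p : ℝ) (hp0 : 0 ≤ p) (hp1 : p ≤ 1)
    {Ω : Type*} [MeasurableSpace Ω] (μ : Measure Ω) [IsProbabilityMeasure μ]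
    (B : Ω → Finset α)
    (hmeas : ∀ S : Finset α, MeasurableSet {ω | B ω = S})
    (hprob : ∀ e : α, (μ {ω | e ∈ B ω}).toReal ≤ p) :
    (∫ ω, g (B ω) ∂μ) ≥ (1 - p) * g ∅ := by
  classical
  set w : Finset α → ℝ := fun S => (μ {ω | B ω = S}).toReal with hw_def
  have hw : ∀ S, 0 ≤ w S := fun S => ENNReal.toReal_nonneg
  have hint : (∫ ω, g (B ω) ∂μ) = ∑ S : Finset α, w S * g S := by
    have heq : (fun ω => g (B ω))
        = fun ω => ∑ S : Finset α, ({ω' | B ω' = S}).indicator (fun _ => g S) ω := by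
      funext ω
      simp [Set.indicator_apply]
    rw [heq, integral_finset_sum _
      (fun S _ => (integrable_const (g S)).indicator (hmeas S))]
    apply Finset.sum_congr rfl
    intro S _
    rw [integral_indicator_const (g S) (hmeas S)]
    simp [hw_def, mul_comm, Measure.real]
  have hdisj : (((univ : Finset (Finset α)) : Set (Finset α))).PairwiseDisjoint
      (fun S => {ω | B ω = S}) := by
    intro S _ T _ hST
    apply Set.disjoint_left.2
    intro ω h1 h2
    exact hST (h1.symm.trans h2)
  have hsum1 : ∑ S : Finset α, w S = 1 := by
    have h1 : (⋃ S ∈ (univ : Finset (Finset α)), {ω | B ω = S}) = Set.univ := by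
      ext ω; simp
    have h2 := measure_biUnion_finset (μ := μ) hdisj (fun S _ => hmeas S)
    rw [h1] at h2
    have h3 : ∑ S : Finset α, w S = ((∑ S : Finset α, μ {ω | B ω = S})).toReal := by
      rw [ENNReal.toReal_sum (fun S _ => measure_ne_top μ _)]
    rw [h3, ← h2]
    simp
  have hmarg : ∀ f : α, ∑ S ∈ univ.filter (fun S => f ∈ S), w S
      = (μ {ω | f ∈ B ω}).toReal := by
    intro f
    have h1 : (⋃ S ∈ univ.filter (fun S : Finset α => f ∈ S), {ω | B ω = S})
        = {ω | f ∈ B ω} := by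
      ext ω
      simp only [Set.mem_iUnion, Finset.mem_filter, Finset.mem_univ, true_and,
        Set.mem_setOf_eq, exists_prop]
      constructor
      · rintro ⟨S, hfS, rfl⟩; exact hfS
      · intro h; exact ⟨B ω, h, rfl⟩
    have h2 := measure_biUnion_finset (μ := μ) (s := univ.filter (fun S : Finset α => f ∈ S))
      (hdisj.subset (Finset.coe_subset.2 (Finset.subset_univ _))) (fun S _ => hmeas S)
    rw [h1] at h2
    rw [← ENNReal.toReal_sum (fun S _ => measure_ne_top μ _), ← h2]
  have hk := key_lemma g hnonneg hsub univ w hw (fun S _ => Finset.subset_univ S)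
    0 p le_rfl hp0 (by
      intro f _
      constructor
      · exact Finset.sum_nonneg (fun S _ => hw S)
      · rw [hmarg f]; exact hprob f)
  rw [hint, hsum1] at *
  have : (if (univ : Finset α) = ∅ then (0:ℝ) * g ∅ else 0) = 0 := by
    split <;> simp
  rw [hsum1] at hk
  rw [this] at hk
  linarith
end

section
/- Let V be a finite set, let f : 2^V → ℝ be a non-negative submodular function, let T ⊆ V be a fixed set, let p ∈ [0,1], and let B be a random subset of V (a measurable map from a probability space to subsets of V) such that P[e ∈ B] ≤ p for every e ∈ V. Then E[f(T ∪ B)] ≥ (1 − p) · f(T). -/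
open Finset MeasureTheory

/-- If `f` is a non-negative submodular function, `T` a fixed set, and `B` a random subset
containing each element with probability at most `p`, then `E[f(T ∪ B)] ≥ (1 - p) f(T)`. -/
theorem random_union_lower_bound {α : Type*} [Fintype α] [DecidableEq α]
    (f : Finset α → ℝ)
    (hnonneg : ∀ S : Finset α, 0 ≤ f S)
    (hsub : ∀ X Y : Finset α, X ⊆ Y → ∀ e ∉ Y,
      f (insert e X) - f X ≥ f (insert e Y) - f Y)
    (T : Finset α)
    (p : ℝ) (hp0 : 0 ≤ p) (hp1 : p ≤ 1)
    {Ω : Type*} [MeasurableSpace Ω] (μ : Measure Ω) [IsProbabilityMeasure μ]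
    (B : Ω → Finset α)
    (hmeas : ∀ S : Finset α, MeasurableSet {ω | B ω = S})
    (hprob : ∀ e : α, (μ {ω | e ∈ B ω}).toReal ≤ p) :
    (∫ ω, f (T ∪ B ω) ∂μ) ≥ (1 - p) * f T := by
  classical
  -- measurability / integrability infrastructure
  letI : MeasurableSpace (Finset α) := ⊤
  have hB : Measurable B := measurable_to_countable' fun S => hmeas S
  have hmeasg : ∀ g : Finset α → ℝ, Measurable fun ω => g (B ω) := fun g =>
    (@measurable_from_top (Finset α) ℝ _ g).comp hB
  have hint : ∀ g : Finset α → ℝ, Integrable (fun ω => g (B ω)) μ := by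
    intro g
    have hbd : ∀ ω, ‖g (B ω)‖ ≤ ∑ S : Finset α, ‖g S‖ := fun ω =>
      Finset.single_le_sum (f := fun S => ‖g S‖) (fun S _ => norm_nonneg _)
        (Finset.mem_univ (B ω))
    exact (integrable_const (∑ S : Finset α, ‖g S‖)).mono'
      ((hmeasg g).aestronglyMeasurable) (Filter.Eventually.of_forall hbd)
  have hmeasE : ∀ e : α, MeasurableSet {ω | e ∈ B ω} := by
    intro e
    have hEq : {ω | e ∈ B ω} = ⋃ S ∈ {S : Finset α | e ∈ S}, {ω | B ω = S} := by
      ext ω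
      constructor
      · intro h
        exact Set.mem_biUnion (by exact h) rfl
      · intro h
        simp only [Set.mem_iUnion, Set.mem_setOf_eq] at h
        obtain ⟨S, hS, hBS⟩ := h
        rw [Set.mem_setOf_eq, hBS]
        exact hS
    rw [hEq]
    exact MeasurableSet.biUnion (Set.to_countable _) (fun S _ => hmeas S)
  -- integral of a "complement indicator"
  have hcomplInt : ∀ (a : α) (d : ℝ),
      (∫ ω, (if a ∈ B ω then 0 else d) ∂μ)
        = (1 - (μ {ω | a ∈ B ω}).toReal) * d := by
    intro a d
    have hfe : (fun ω => if a ∈ B ω then 0 else d)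
        = Set.indicator ({ω | a ∈ B ω}ᶜ) (fun _ => d) := by
      funext ω; by_cases h : a ∈ B ω <;> simp [Set.indicator, h]
    rw [hfe, integral_indicator_const d (hmeasE a).compl]
    rw [measureReal_def, prob_compl_eq_one_sub (hmeasE a)]
    rw [ENNReal.toReal_sub_of_le prob_le_one ENNReal.one_ne_top]
    simp [smul_eq_mul]
  -- main claim by strong induction on the set of active elements
  have main : ∀ U : Finset α, ∀ T₀ : Finset α, ∀ q : ℝ, 0 ≤ q →
      Disjoint T₀ U → (∀ e ∈ U, (μ {ω | e ∈ B ω}).toReal ≤ q) →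
      (1 - q) * f T₀ ≤ ∫ ω, f (T₀ ∪ (B ω ∩ U)) ∂μ := by
    intro U
    induction U using Finset.strongInduction with
    | _ U ih =>
      intro T₀ q hq0 hdisj hqU
      rcases U.eq_empty_or_nonempty with rfl | hUne
      · simp only [Finset.inter_empty, Finset.union_empty]
        rw [integral_const, measureReal_def, measure_univ, ENNReal.toReal_one, one_smul]
        nlinarith [hnonneg T₀]
      · -- pick element with maximal probability
        obtain ⟨a, haU, hamax⟩ :=
          U.exists_max_image (fun e => (μ {ω | e ∈ B ω}).toReal) hUne
        set x : ℝ := (μ {ω | a ∈ B ω}).toReal with hxdef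
        have hx0 : 0 ≤ x := ENNReal.toReal_nonneg
        set T' : Finset α := insert a T₀ with hT'def
        set U' : Finset α := U.erase a with hU'def
        have haT₀ : a ∉ T₀ := fun h => (Finset.disjoint_left.1 hdisj h) haU
        set d : ℝ := f T₀ - f T' with hddef
        -- pointwise inequality
        have hpt : ∀ ω, f (T' ∪ (B ω ∩ U')) + (if a ∈ B ω then 0 else d)
            ≤ f (T₀ ∪ (B ω ∩ U)) := by
          intro ω
          by_cases haB : a ∈ B ω
          · have hsets : T₀ ∪ (B ω ∩ U) = T' ∪ (B ω ∩ U') := by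
              ext y
              simp only [hT'def, hU'def, Finset.mem_union, Finset.mem_inter,
                Finset.mem_insert, Finset.mem_erase]
              constructor
              · rintro (h | ⟨h1, h2⟩)
                · exact Or.inl (Or.inr h)
                · by_cases hy : y = a
                  · exact Or.inl (Or.inl hy)
                  · exact Or.inr ⟨h1, hy, h2⟩
              · rintro (h | h)
                · rcases h with rfl | h
                  · exact Or.inr ⟨haB, haU⟩
                  · exact Or.inl h
                · exact Or.inr ⟨h.1, h.2.2⟩
            rw [hsets]
            simp [haB]
          · have hBU : B ω ∩ U = B ω ∩ U' := by
              ext y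
              simp only [hU'def, Finset.mem_inter, Finset.mem_erase]
              constructor
              · rintro ⟨h1, h2⟩
                exact ⟨h1, fun hya => haB (hya ▸ h1), h2⟩
              · rintro ⟨h1, _, h2⟩
                exact ⟨h1, h2⟩
            have haX : a ∉ T₀ ∪ (B ω ∩ U') := by
              simp only [Finset.mem_union, Finset.mem_inter, hU'def,
                Finset.mem_erase]
              push_neg
              exact ⟨haT₀, fun h => absurd h haB⟩
            have hsubkey := hsub T₀ (T₀ ∪ (B ω ∩ U'))
              (Finset.subset_union_left) a haX
            have hT'u : T' ∪ (B ω ∩ U') = insert a (T₀ ∪ (B ω ∩ U')) := by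
              rw [hT'def, Finset.insert_union]
            rw [hBU, hT'u]
            simp only [haB, if_false, hddef, hT'def]
            linarith
        -- integrate the pointwise inequality
        have hRint : Integrable
            (fun ω => f (T' ∪ (B ω ∩ U')) + (if a ∈ B ω then 0 else d)) μ :=
          hint (fun S => f (T' ∪ (S ∩ U')) + (if a ∈ S then 0 else d))
        have hLint : Integrable (fun ω => f (T₀ ∪ (B ω ∩ U))) μ :=
          hint (fun S => f (T₀ ∪ (S ∩ U)))
        have hIm := integral_mono hRint hLint hpt
        have hsplit : (∫ ω, (f (T' ∪ (B ω ∩ U')) + (if a ∈ B ω then 0 else d)) ∂μ)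
            = (∫ ω, f (T' ∪ (B ω ∩ U')) ∂μ) + (1 - x) * d := by
          rw [integral_add (hint (fun S => f (T' ∪ (S ∩ U'))))
            (hint (fun S => if a ∈ S then 0 else d))]
          rw [hcomplInt a d]
        rw [hsplit] at hIm
        -- apply the induction hypothesis
        have hss : U' ⊂ U := Finset.erase_ssubset haU
        have hdisj' : Disjoint T' U' := by
          rw [hT'def, hU'def, Finset.disjoint_insert_left]
          exact ⟨Finset.notMem_erase a U,
            Finset.disjoint_of_subset_right (Finset.erase_subset a U) hdisj⟩
        have hqU' : ∀ e ∈ U', (μ {ω | e ∈ B ω}).toReal ≤ x :=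
          fun e he => hamax e (Finset.mem_of_mem_erase he)
        have hIH := ih U' hss T' x hx0 hdisj' hqU'
        have hxq : x ≤ q := hqU a haU
        have hfT₀ : 0 ≤ f T₀ := hnonneg T₀
        -- combine: ∫ ≥ (1-x) f T' + (1-x) d = (1-x) f T₀ ≥ (1-q) f T₀
        have hcomb : (1 - x) * f T₀ ≤ ∫ ω, f (T₀ ∪ (B ω ∩ U)) ∂μ := by
          have : (1 - x) * f T₀ = (1 - x) * f T' + (1 - x) * d := by
            rw [hddef]; ring
          rw [this]
          have h1x : 0 ≤ 1 - x := by
            have := prob_le_one (μ := μ) (s := {ω | a ∈ B ω})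
            have h2 : x ≤ 1 := by
              rw [hxdef]
              exact ENNReal.toReal_le_of_le_ofReal one_pos.le (by simpa using this)
            linarith
          nlinarith [hIH, hIm]
        nlinarith
  -- conclude
  have hfin := main (Finset.univ \ T) T p hp0 Finset.disjoint_sdiff
    (fun e _ => hprob e)
  have heq : (fun ω => f (T ∪ (B ω ∩ (Finset.univ \ T)))) = fun ω => f (T ∪ B ω) := by
    funext ω
    congr 1
    ext y
    simp only [Finset.mem_union, Finset.mem_inter, Finset.mem_sdiff, Finset.mem_univ,
      true_and]
    tauto
  rw [heq] at hfin
  exact hfin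
end

section
/- Let V = A ∪ B ∪ {x} be a finite set, where A and B are disjoint and x ∉ A ∪ B. Define f : 2^V → ℝ by f(S) = |S| if x ∉ S and f(S) = |S ∩ A| if x ∈ S. Then f is non-negative and submodular. -/
open Finset

/-!
Write `f S = #(S ∩ A) + g S` with `g = nullifiedCard A x`. The first summand is modular.
Adding `x` to `S` changes `g` by `-#(S \ A)`, which only decreases as `S` grows; adding any
other `e` changes `g` by `1` or `0`, and by `0` as soon as `x ∈ S`. Hence `g`, and with it `f`,
has diminishing marginal gains.
-/

section

variable {α : Type*} [DecidableEq α]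

def HasDiminishingReturns (f : Finset α → ℝ) : Prop :=
  ∀ ⦃X Y : Finset α⦄ ⦃e : α⦄, X ⊆ Y → e ∉ Y → f (insert e Y) - f Y ≤ f (insert e X) - f X

theorem HasDiminishingReturns.add {f g : Finset α → ℝ} (hf : HasDiminishingReturns f)
    (hg : HasDiminishingReturns g) : HasDiminishingReturns (f + g) := by
  intro X Y e hXY heY
  have := hf hXY heY
  have := hg hXY heY
  simp only [Pi.add_apply]
  linarith

theorem card_insert_inter_sub_card_inter {A S : Finset α} {e : α} (he : e ∉ S) :
    (#(insert e S ∩ A) : ℝ) - #(S ∩ A) = if e ∈ A then 1 else 0 := by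
  split_ifs with heA
  · rw [insert_inter_of_mem heA, card_insert_of_notMem fun h ↦ he (mem_inter.1 h).1]
    push_cast
    ring
  · rw [insert_inter_of_notMem heA, sub_self]

theorem card_insert_sdiff_sub_card_sdiff {A S : Finset α} {e : α} (he : e ∉ S) :
    (#(insert e S \ A) : ℝ) - #(S \ A) = if e ∈ A then 0 else 1 := by
  split_ifs with heA
  · rw [insert_sdiff_of_mem _ heA, sub_self]
  · rw [insert_sdiff_of_notMem _ heA, card_insert_of_notMem fun h ↦ he (mem_sdiff.1 h).1]
    push_cast
    ring

theorem hasDiminishingReturns_card_inter (A : Finset α) :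
    HasDiminishingReturns fun S ↦ (#(S ∩ A) : ℝ) := by
  intro X Y e hXY heY
  rw [card_insert_inter_sub_card_inter heY,
    card_insert_inter_sub_card_inter fun h ↦ heY (hXY h)]

noncomputable def nullifiedCard (A : Finset α) (x : α) (S : Finset α) : ℝ :=
  if x ∈ S then 0 else #(S \ A)

theorem nullifiedCard_insert_self_sub {A S : Finset α} {x : α} (hx : x ∉ S) :
    nullifiedCard A x (insert x S) - nullifiedCard A x S = -#(S \ A) := by
  simp only [nullifiedCard, mem_insert_self, if_true, hx, if_false, zero_sub]

theorem nullifiedCard_insert_sub {A S : Finset α} {x e : α} (hex : e ≠ x) (he : e ∉ S) :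
    nullifiedCard A x (insert e S) - nullifiedCard A x S = if x ∈ S then 0 else
      if e ∈ A then 0 else 1 := by
  have hx : x ∈ insert e S ↔ x ∈ S := by simp [hex.symm]
  by_cases hxS : x ∈ S
  · simp only [nullifiedCard, hx, hxS, if_true, sub_self]
  · simp only [nullifiedCard, hx, hxS, if_false]
    exact card_insert_sdiff_sub_card_sdiff he

theorem hasDiminishingReturns_nullifiedCard (A : Finset α) (x : α) :
    HasDiminishingReturns (nullifiedCard A x) := by
  intro X Y e hXY heY
  have heX : e ∉ X := fun h ↦ heY (hXY h)
  obtain rfl | hex := eq_or_ne e x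
  · rw [nullifiedCard_insert_self_sub heY, nullifiedCard_insert_self_sub heX, neg_le_neg_iff]
    exact_mod_cast card_le_card (sdiff_subset_sdiff hXY le_rfl)
  · rw [nullifiedCard_insert_sub hex heY, nullifiedCard_insert_sub hex heX]
    by_cases hxY : x ∈ Y
    · rw [if_pos hxY]
      split_ifs <;> norm_num
    · rw [if_neg hxY, if_neg fun h ↦ hxY (hXY h)]

theorem card_inter_add_nullifiedCard (A S : Finset α) (x : α) :
    (#(S ∩ A) : ℝ) + nullifiedCard A x S = if x ∈ S then (#(S ∩ A) : ℝ) else (#S : ℝ) := by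
  unfold nullifiedCard
  split_ifs
  · exact add_zero _
  · exact_mod_cast card_inter_add_card_sdiff S A

end

theorem nullifier_submodular_general {α : Type*} [DecidableEq α]
    (A : Finset α) (x : α)
    (V : Finset α)
    (f : Finset α → ℝ)
    (hf : ∀ S : Finset α, f S = if x ∈ S then ((S ∩ A).card : ℝ) else (S.card : ℝ)) :
    (∀ S ⊆ V, 0 ≤ f S) ∧
    (∀ X Y : Finset α, X ⊆ Y → Y ⊆ V → ∀ e ∈ V, e ∉ Y →
      f (insert e X) - f X ≥ f (insert e Y) - f Y) := by
  have hf_eq : f = (fun S ↦ (#(S ∩ A) : ℝ)) + nullifiedCard A x := by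
    funext S
    rw [hf, Pi.add_apply, card_inter_add_nullifiedCard]
  refine ⟨fun S _ ↦ by rw [hf]; split <;> positivity, fun X Y hXY _ e _ heY ↦ ?_⟩
  rw [hf_eq]
  exact (hasDiminishingReturns_card_inter A).add (hasDiminishingReturns_nullifiedCard A x) hXY heY

/-- The function `f(S) = |S|` if `x ∉ S` and `f(S) = |S ∩ A|` if `x ∈ S`, on the ground set
`V = A ∪ B ∪ {x}` with `A`, `B`, `{x}` pairwise disjoint, is non-negative and submodular. -/
theorem nullifier_submodular {α : Type*} [DecidableEq α]
    (A B : Finset α) (x : α)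
    (hAB : Disjoint A B) (hxA : x ∉ A) (hxB : x ∉ B)
    (V : Finset α) (hV : V = A ∪ B ∪ {x})
    (f : Finset α → ℝ)
    (hf : ∀ S : Finset α, f S = if x ∈ S then ((S ∩ A).card : ℝ) else (S.card : ℝ)) :
    (∀ S ⊆ V, 0 ≤ f S) ∧
    (∀ X Y : Finset α, X ⊆ Y → Y ⊆ V → ∀ e ∈ V, e ∉ Y →
      f (insert e X) - f X ≥ f (insert e Y) - f Y) :=
  nullifier_submodular_general A x V f hf
end

section
/- Let a < b be positive integers. Let V = V₁ ∪ V₂ ∪ V₃ be a finite set partitioned into three nonempty color classes with |V₂| = |V₃| = b, and fix v ∈ V₁. Let the arc set be A = ((V₁ \ {v}) × V₂) ∪ ({v} × V₃), and let f(S) = |{(u, w) ∈ A : u ∈ S and w ∉ S}| be the directed cut function. Let F be the feasible family for the bounds ℓ₁ = u₁ = 1, ℓ₂ = u₂ = b − a, ℓ₃ = u₃ = 0 and cardinality bound k = b − a + 1. Then for every S ∈ F: if v ∈ S then f(S) = b, and if v ∉ S then f(S) = a. -/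
/-!
Feasibility pins down `|S ∩ V₁| = 1`, `|S ∩ V₂| = b - a` and `S ∩ V₃ = ∅`, so exactly `a`
vertices of `V₂` and all `b` vertices of `V₃` lie outside `S`. The arcs leaving `S` are those
from the unique vertex of `S ∩ V₁`: if that vertex is `v` they go to all of `V₃`, otherwise
they go to the `a` vertices of `V₂ \ S`.
-/

open Finset

theorem Feasible.card_inter_eq {α : Type*} [DecidableEq α] {C : ℕ} {V : Finset α}
    {Vc : Fin C → Finset α} {ℓ : Fin C → ℕ} {k : ℕ} {S : Finset α}
    (hS : Feasible V Vc ℓ ℓ k S) (c : Fin C) : #(S ∩ Vc c) = ℓ c :=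
  le_antisymm (hS.2.2 c).2 (hS.2.2 c).1

section OutArcs

variable {α : Type*} [DecidableEq α]

def outArcs (A : Finset (α × α)) (S : Finset α) : Finset (α × α) :=
  A.filter fun p => p.1 ∈ S ∧ p.2 ∉ S

theorem outArcs_union (A B : Finset (α × α)) (S : Finset α) :
    outArcs (A ∪ B) S = outArcs A S ∪ outArcs B S :=
  filter_union _ _ _

theorem outArcs_product (X Y S : Finset α) : outArcs (X ×ˢ Y) S = (X ∩ S) ×ˢ (Y \ S) := by
  ext ⟨x, y⟩
  simp only [outArcs, mem_filter, mem_product, mem_inter, mem_sdiff]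
  tauto

theorem card_outArcs_union_of_disjoint {A B : Finset (α × α)} (h : Disjoint A B)
    (S : Finset α) : #(outArcs (A ∪ B) S) = #(outArcs A S) + #(outArcs B S) := by
  exact (congrArg card (outArcs_union A B S)).trans
    (card_union_of_disjoint (disjoint_filter_filter h))

theorem card_outArcs_product (X Y S : Finset α) :
    #(outArcs (X ×ˢ Y) S) = #(X ∩ S) * #(Y \ S) := by
  rw [outArcs_product, card_product]

theorem card_outArcs_star (X Y Z S : Finset α) (v : α) :
    #(outArcs ((X \ {v}) ×ˢ Y ∪ {v} ×ˢ Z) S) =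
      #((X \ {v}) ∩ S) * #(Y \ S) + #({v} ∩ S) * #(Z \ S) := by
  rw [card_outArcs_union_of_disjoint (disjoint_product.2 (.inl sdiff_disjoint)),
    card_outArcs_product, card_outArcs_product]

end OutArcs

theorem sdiff_singleton_inter_eq_erase {α : Type*} [DecidableEq α] (X S : Finset α) (v : α) :
    (X \ {v}) ∩ S = (S ∩ X).erase v := by
  ext x
  simp only [mem_inter, mem_sdiff, mem_singleton, mem_erase]
  tauto

theorem hardness_instance_values_general {α : Type*} [DecidableEq α]
    (a b : ℕ) (hab : a < b)
    (V V₁ V₂ V₃ : Finset α)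
    (h2card : V₂.card = b) (h3card : V₃.card = b)
    (v : α) (hv : v ∈ V₁)
    (A : Finset (α × α)) (hA : A = ((V₁ \ {v}) ×ˢ V₂) ∪ ({v} ×ˢ V₃))
    (f : Finset α → ℝ)
    (hf : ∀ S : Finset α,
      f S = ((A.filter fun p => p.1 ∈ S ∧ p.2 ∉ S).card : ℝ))
    (S : Finset α)
    (hS : Feasible V ![V₁, V₂, V₃] ![1, b - a, 0] ![1, b - a, 0] (b - a + 1) S) :
    (v ∈ S → f S = b) ∧ (v ∉ S → f S = a) := by
  have h1 : #(S ∩ V₁) = 1 := hS.card_inter_eq 0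
  have h2 : #(S ∩ V₂) = b - a := hS.card_inter_eq 1
  have h3 : #(S ∩ V₃) = 0 := hS.card_inter_eq 2
  have hV₂ : #(V₂ \ S) = a := by rw [card_sdiff, h2card, h2]; omega
  have hV₃ : #(V₃ \ S) = b := by rw [card_sdiff, h3card, h3, Nat.sub_zero]
  have hcut : f S = (#((V₁ \ {v}) ∩ S) * a + #({v} ∩ S) * b : ℕ) := by
    rw [hf, ← hV₂, ← hV₃, ← card_outArcs_star, hA, outArcs]
  rw [hcut, sdiff_singleton_inter_eq_erase]
  refine ⟨fun hvS => ?_, fun hvS => ?_⟩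
  · rw [card_erase_of_mem (mem_inter.2 ⟨hvS, hv⟩), h1, singleton_inter_of_mem hvS]
    simp
  · rw [erase_eq_of_notMem (fun h => hvS (mem_inter.1 h).1), h1, singleton_inter_of_notMem hvS]
    simp

/-- In the hardness instance: `V = V₁ ∪ V₂ ∪ V₃` with `|V₂| = |V₃| = b`, arcs from
`V₁ \ {v}` to `V₂` and from `v` to `V₃`, bounds `ℓ₁ = u₁ = 1`, `ℓ₂ = u₂ = b - a`,
`ℓ₃ = u₃ = 0`, and cardinality bound `k = b - a + 1`, every feasible `S` has cut value
`b` if `v ∈ S` and `a` if `v ∉ S`. -/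
theorem hardness_instance_values {α : Type*} [DecidableEq α]
    (a b : ℕ) (ha : 0 < a) (hab : a < b)
    (V V₁ V₂ V₃ : Finset α)
    (hV : V = V₁ ∪ V₂ ∪ V₃)
    (h12 : Disjoint V₁ V₂) (h13 : Disjoint V₁ V₃) (h23 : Disjoint V₂ V₃)
    (h1ne : V₁.Nonempty) (h2ne : V₂.Nonempty) (h3ne : V₃.Nonempty)
    (h2card : V₂.card = b) (h3card : V₃.card = b)
    (v : α) (hv : v ∈ V₁)
    (A : Finset (α × α)) (hA : A = ((V₁ \ {v}) ×ˢ V₂) ∪ ({v} ×ˢ V₃))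
    (f : Finset α → ℝ)
    (hf : ∀ S : Finset α,
      f S = ((A.filter fun p => p.1 ∈ S ∧ p.2 ∉ S).card : ℝ))
    (S : Finset α)
    (hS : Feasible V ![V₁, V₂, V₃] ![1, b - a, 0] ![1, b - a, 0] (b - a + 1) S) :
    (v ∈ S → f S = b) ∧ (v ∉ S → f S = a) :=
  hardness_instance_values_general a b hab V V₁ V₂ V₃ h2card h3card v hv A hA f hf S hS
end
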